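/- arXiv:2111.12851 — 2 statements merged into one kernel-verified Lean document; each statement's English description precedes it below -/
import Mathlib

section
/- As the sphere radii grow with R_S = cR_E, R_S → ∞, c → 1⁺, R_S(c−1) → 0 and R_S²(c²−1) → ∞, the truncated Rayleigh density f(r) = 2πλ(R_S/R_E)·e^{λπ(R_S/R_E)(R_S²−R_E²)}/(e^{2λπR_S(R_S−R_E)}−1)·r e^{−λπ(R_S/R_E)r²} converges pointwise for each fixed r > 0 to the planar Rayleigh nearest-neighbor density 2πλ r e^{−λπr²}. -/
open Real Filter Topology

/-- Rewrite `exp e / (exp a - 1)` as `exp (e - a) / (1 - exp (-a))`. -/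
lemma aux_exp_div (e a : ℝ) :
    Real.exp e / (Real.exp a - 1) = Real.exp (e - a) / (1 - Real.exp (-a)) := by
  rw [Real.exp_sub, Real.exp_neg]
  have hu : Real.exp a ≠ 0 := (Real.exp_pos a).ne'
  rcases eq_or_ne (Real.exp a) 1 with h | h
  · simp [h]
  · have h1 : Real.exp a - 1 ≠ 0 := sub_ne_zero.mpr h
    field_simp

/-- As `R_S = cR_E → ∞` with `c → 1`, `R_S(c−1) → 0` and `R_S²(c²−1) → ∞`, the
truncated Rayleigh nearest-distance density converges pointwise, for each fixed
`r > 0`, to the planar Rayleigh density `2πλ r e^{−λπr²}`. -/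
theorem truncated_rayleigh_tendsto_rayleigh (l : ℝ) (hl : 0 < l)
    (RE c : ℕ → ℝ) (hRE : ∀ n, 0 < RE n)
    (RS : ℕ → ℝ) (hRS : RS = fun n => c n * RE n)
    (hc : Tendsto c atTop (nhds 1))
    (hRSinf : Tendsto RS atTop atTop)
    (h1 : Tendsto (fun n => RS n * (c n - 1)) atTop (nhds 0))
    (h2 : Tendsto (fun n => RS n ^ 2 * (c n ^ 2 - 1)) atTop atTop)
    (f : ℕ → ℝ → ℝ)
    (hf : f = fun n r =>
      2 * π * l * (RS n / RE n) *
        (Real.exp (l * π * (RS n / RE n) * (RS n ^ 2 - RE n ^ 2)) /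
          (Real.exp (2 * l * π * RS n * (RS n - RE n)) - 1)) *
        r * Real.exp (-(l * π * (RS n / RE n) * r ^ 2))) :
    ∀ r > 0, Tendsto (fun n => f n r) atTop
      (nhds (2 * π * l * r * Real.exp (-(l * π * r ^ 2)))) := by
  intro r hr
  have hπ := Real.pi_pos
  have hcpos : ∀ᶠ n in atTop, (1:ℝ)/2 < c n :=
    hc.eventually (eventually_gt_nhds (by norm_num))
  have hceq : ∀ n, RS n / RE n = c n := by
    intro n
    rw [hRS]
    field_simp [(hRE n).ne']
  have hREeq : ∀ n, c n ≠ 0 → RE n = RS n / c n := by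
    intro n hn
    rw [hRS]
    field_simp
  -- RS^2 * (c - 1) → ∞
  have hc1 : Tendsto (fun n => RS n ^ 2 * (c n - 1)) atTop atTop := by
    have h3 : Tendsto (fun n => c n + 1) atTop (nhds 2) := by
      have := hc.add (tendsto_const_nhds (x := (1:ℝ)))
      norm_num at this
      exact this
    have h4 : Tendsto (fun n => (c n + 1)⁻¹) atTop (nhds (2⁻¹)) :=
      h3.inv₀ (by norm_num)
    have h5 := Tendsto.atTop_mul_pos (by norm_num : (0:ℝ) < 2⁻¹) h2 h4
    refine h5.congr' ?_
    filter_upwards [hcpos] with n hn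
    have hne : c n + 1 ≠ 0 := by linarith
    field_simp
    ring
  -- A := 2lπ RS (RS - RE) → ∞
  have hA : Tendsto (fun n => 2 * l * π * RS n * (RS n - RE n)) atTop atTop := by
    have h4 : Tendsto (fun n => 2 * l * π / c n) atTop (nhds (2 * l * π / 1)) :=
      tendsto_const_nhds.div hc one_ne_zero
    have h5 := Tendsto.atTop_mul_pos (by positivity : (0:ℝ) < 2 * l * π / 1) hc1 h4
    refine h5.congr' ?_
    filter_upwards [hcpos] with n hn
    have hne : c n ≠ 0 := by linarith
    rw [hREeq n hne]
    field_simp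
  -- D := lπ (RS (c-1))² / c → 0
  have hD : Tendsto (fun n => l * π * (RS n * (c n - 1)) ^ 2 / c n) atTop (nhds 0) := by
    have h4 : Tendsto (fun n => (RS n * (c n - 1)) ^ 2) atTop (nhds (0 ^ 2)) := h1.pow 2
    have h5 : Tendsto (fun n => l * π * (RS n * (c n - 1)) ^ 2) atTop (nhds (l * π * 0 ^ 2)) :=
      tendsto_const_nhds.mul h4
    have h6 := h5.div hc one_ne_zero
    norm_num at h6
    exact h6
  -- numerator exp(D) → 1
  have hnum : Tendsto (fun n => Real.exp (l * π * (RS n * (c n - 1)) ^ 2 / c n))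
      atTop (nhds 1) := by
    have := (Real.continuous_exp.tendsto 0).comp hD
    simpa [Function.comp_def] using this
  -- denominator 1 - exp(-A) → 1
  have hden : Tendsto (fun n => 1 - Real.exp (-(2 * l * π * RS n * (RS n - RE n))))
      atTop (nhds 1) := by
    have h4 : Tendsto (fun n => -(2 * l * π * RS n * (RS n - RE n))) atTop atBot :=
      tendsto_neg_atTop_atBot.comp hA
    have h5 : Tendsto (fun n => Real.exp (-(2 * l * π * RS n * (RS n - RE n))))
        atTop (nhds 0) := Real.tendsto_exp_atBot.comp h4
    have := (tendsto_const_nhds (x := (1:ℝ))).sub h5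
    norm_num at this
    exact this
  have hratio : Tendsto (fun n => Real.exp (l * π * (RS n * (c n - 1)) ^ 2 / c n) /
      (1 - Real.exp (-(2 * l * π * RS n * (RS n - RE n))))) atTop (nhds 1) := by
    have := hnum.div hden one_ne_zero
    norm_num at this
    exact this
  -- last exponential factor
  have hexp2 : Tendsto (fun n => Real.exp (-(l * π * c n * r ^ 2)))
      atTop (nhds (Real.exp (-(l * π * 1 * r ^ 2)))) := by
    have hcont : Continuous fun x : ℝ => Real.exp (-(l * π * x * r ^ 2)) := by
      continuity
    exact (hcont.tendsto 1).comp hc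
  -- combine
  have hg : Tendsto (fun n => 2 * π * l * c n *
      (Real.exp (l * π * (RS n * (c n - 1)) ^ 2 / c n) /
        (1 - Real.exp (-(2 * l * π * RS n * (RS n - RE n))))) *
      r * Real.exp (-(l * π * c n * r ^ 2))) atTop
      (nhds (2 * π * l * 1 * 1 * r * Real.exp (-(l * π * 1 * r ^ 2)))) :=
    (((tendsto_const_nhds.mul hc).mul hratio).mul tendsto_const_nhds).mul hexp2
  refine Tendsto.congr' ?_ (by simpa using hg)
  · filter_upwards [hcpos] with n hn
    have hne : c n ≠ 0 := by linarith
    rw [hf]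
    simp only
    rw [hceq n, aux_exp_div]
    symm
    have hexpo : l * π * c n * (RS n ^ 2 - RE n ^ 2) - 2 * l * π * RS n * (RS n - RE n)
        = l * π * (RS n * (c n - 1)) ^ 2 / c n := by
      rw [hREeq n hne]
      field_simp
      ring
    rw [hexpo]
end

section
/- For every integer m ≥ 1 and x ≥ 0, with κ = (m!)^{−1/m} ∈ (0,1], the regularized lower incomplete gamma function satisfies (1 − e^{−mκx})^m ≤ (1/Γ(m))∫₀^{mx} t^{m−1}e^{−t} dt ≤ (1 − e^{−mx})^m, with equality throughout when m = 1. -/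
set_option maxHeartbeats 1000000

open Real intervalIntegral

open Set Filter MeasureTheory

namespace AlzerAux
lemma sign_split {g : ℝ → ℝ} {p q : ℝ} (h0p : 0 ≤ p) (hpq : p ≤ q)
    (hmono : MonotoneOn g (Icc 0 p)) (hanti : AntitoneOn g (Ici p))
    (hg0 : g 0 = 0) (hgq : g q < 0) (hgc : ContinuousOn g (Icc p q)) :
    ∃ b, p ≤ b ∧ (∀ y ∈ Icc (0:ℝ) b, 0 ≤ g y) ∧ (∀ y ∈ Ici b, g y ≤ 0) := by
  have hgp : 0 ≤ g p := by
    have := hmono (Set.left_mem_Icc.2 h0p) (Set.right_mem_Icc.2 h0p) h0p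
    rwa [hg0] at this
  obtain ⟨b, hbmem, hgb⟩ := intermediate_value_Icc' hpq hgc ⟨hgq.le, hgp⟩
  refine ⟨b, hbmem.1, ?_, ?_⟩
  · rintro y ⟨hy0, hyb⟩
    rcases le_or_gt y p with h | h
    · have := hmono (Set.left_mem_Icc.2 h0p) ⟨hy0, h⟩ hy0
      rwa [hg0] at this
    · have := hanti (mem_Ici.2 h.le) (mem_Ici.2 hbmem.1) hyb
      rwa [hgb] at this
  · intro y hy
    have := hanti (mem_Ici.2 hbmem.1) (mem_Ici.2 (le_trans hbmem.1 hy)) hy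
    rwa [hgb] at this

lemma pos_of_updown {f : ℝ → ℝ} {b : ℝ} (hb : 0 ≤ b) (hf0 : f 0 = 0)
    (hlim : Tendsto f atTop (nhds 0))
    (hmono : MonotoneOn f (Icc 0 b)) (hanti : AntitoneOn f (Ici b))
    {y : ℝ} (hy : 0 ≤ y) : 0 ≤ f y := by
  rcases le_or_gt y b with h | h
  · have := hmono (Set.left_mem_Icc.2 hb) ⟨hy, h⟩ hy
    rwa [hf0] at this
  · refine le_of_tendsto hlim ?_
    filter_upwards [eventually_ge_atTop y] with z hz
    exact hanti (mem_Ici.2 h.le) (mem_Ici.2 (h.le.trans hz)) hz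

lemma factorial_le_pow : ∀ m : ℕ, 1 ≤ m → (m.factorial : ℝ) ≤ (((m:ℝ) + 1) / 2) ^ m := by
  intro m
  induction m with
  | zero => omega
  | succ k ih =>
    intro _
    rcases Nat.eq_zero_or_pos k with hk | hk
    · subst hk; norm_num
    have hih := ih hk
    have hM : (0:ℝ) < (k:ℝ) + 1 := by positivity
    set M : ℝ := (k:ℝ) + 1 with hMdef
    have hbern : (2:ℝ) ≤ (1 + 1/M) ^ (k+1) := by
      have hge : (-2:ℝ) ≤ 1/M := le_trans (by norm_num) (by positivity : (0:ℝ) ≤ 1/M)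
      have h := one_add_mul_le_pow hge (k+1)
      have h2 : 1 + ((k:ℝ)+1) * (1/M) = 2 := by
        rw [hMdef]; field_simp; norm_num
      push_cast at h
      linarith [h, h2.le]
    have hstep : 2 * (M/2)^(k+1) ≤ ((M+1)/2)^(k+1) := by
      have hideq : ((M+1)/2) = (M/2) * (1 + 1/M) := by field_simp
      rw [hideq, mul_pow]
      have hpos : (0:ℝ) ≤ (M/2)^(k+1) := by positivity
      nlinarith [mul_le_mul_of_nonneg_left hbern hpos]
    have hfact : ((k+1).factorial : ℝ) = M * (k.factorial : ℝ) := by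
      rw [Nat.factorial_succ]; push_cast; ring
    calc ((k+1).factorial : ℝ) = M * (k.factorial : ℝ) := hfact
      _ ≤ M * (M/2)^k := by
          apply mul_le_mul_of_nonneg_left _ hM.le
          exact_mod_cast hih
      _ = 2 * (M/2)^(k+1) := by ring
      _ ≤ ((M+1)/2)^(k+1) := hstep
      _ = ((((k+1:ℕ):ℝ) + 1)/2) ^ (k+1) := by congr 1; push_cast; ring




lemma integrand_continuous (n : ℕ) : Continuous fun t : ℝ => t ^ n * Real.exp (-t) :=
  (continuous_pow n).mul (Real.continuous_exp.comp continuous_neg)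

lemma I_hasDerivAt (n : ℕ) (y : ℝ) :
    HasDerivAt (fun u => ∫ t in (0:ℝ)..u, t ^ n * Real.exp (-t)) (y ^ n * Real.exp (-y)) y :=
  intervalIntegral.integral_hasDerivAt_right
    ((integrand_continuous n).intervalIntegrable _ _)
    ((integrand_continuous n).stronglyMeasurable.stronglyMeasurableAtFilter)
    (integrand_continuous n).continuousAt

lemma I_tendsto (n : ℕ) :
    Tendsto (fun y => ∫ t in (0:ℝ)..y, t ^ n * Real.exp (-t)) atTop
      (nhds (n.factorial : ℝ)) := by
  have heq : ∀ x ∈ Ioi (0:ℝ), Real.exp (-x) * x ^ ((((n:ℝ) + 1) - 1)) = x ^ n * Real.exp (-x) := by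
    intro x _
    rw [add_sub_cancel_right, Real.rpow_natCast, mul_comm]
  have hint : IntegrableOn (fun t : ℝ => t ^ n * Real.exp (-t)) (Ioi 0) := by
    refine (Real.GammaIntegral_convergent (s := (n:ℝ) + 1) (by positivity)).congr_fun ?_
      measurableSet_Ioi
    exact heq
  have hval : (∫ t in Set.Ioi (0:ℝ), t ^ n * Real.exp (-t)) = (n.factorial : ℝ) := by
    rw [← Real.Gamma_nat_eq_factorial, Real.Gamma_eq_integral (by positivity : (0:ℝ) < (n:ℝ) + 1)]
    exact (setIntegral_congr_fun measurableSet_Ioi heq).symm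
  have := intervalIntegral_tendsto_integral_Ioi 0 hint tendsto_id
  rwa [hval] at this


lemma lower_bound (m : ℕ) (hm : 2 ≤ m) (δ : ℝ) (hδ0 : 0 < δ) (hδ1 : δ < 1)
    (hδm : δ ^ m = ((m.factorial : ℝ))⁻¹) (hδ2 : 2 / ((m:ℝ) + 1) ≤ δ)
    {y : ℝ} (hy : 0 ≤ y) :
    (1 - Real.exp (-(δ * y))) ^ m
      ≤ (∫ t in (0:ℝ)..y, t ^ (m - 1) * Real.exp (-t)) / ((m - 1).factorial : ℝ) := by
  set n := m - 1 with hn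
  have hmn : m = n + 1 := by omega
  have hn1 : 1 ≤ n := by omega
  have hn0 : (0:ℝ) < (n:ℝ) := by exact_mod_cast hn1
  set c : ℝ := (1 - δ) / (n:ℝ) with hc
  have hc0 : 0 < c := div_pos (by linarith) hn0
  have hnc : (n:ℝ) * c = 1 - δ := by rw [hc]; field_simp
  have hmcast : (m:ℝ) = (n:ℝ) + 1 := by rw [hmn]; push_cast; ring
  have hδc : 2 * c ≤ δ := by
    have h2 : 2 ≤ δ * ((m:ℝ)+1) := (div_le_iff₀ (by positivity)).1 hδ2
    rw [hc]
    rw [mul_div_assoc', div_le_iff₀ hn0]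
    nlinarith [hmcast]
  have hcδ : c < δ := by linarith
  -- The function W
  set P : ℝ := (δ - 2*c) / (c * (δ - c)) with hP
  have hcdc : 0 < c * (δ - c) := mul_pos hc0 (by linarith)
  have hP0 : 0 ≤ P := div_nonneg (by linarith) hcdc.le
  set W : ℝ → ℝ := fun z => (1 - c*z) * Real.exp ((δ - c)*z) - 1 with hW
  have hW' : ∀ z, HasDerivAt W (((δ - 2*c) - c*(δ-c)*z) * Real.exp ((δ-c)*z)) z := by
    intro z
    have h1 : HasDerivAt (fun z : ℝ => (δ - c)*z) (δ - c) z := by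
      simpa using (hasDerivAt_id z).const_mul (δ - c)
    have h2 := h1.exp
    have h3 : HasDerivAt (fun z : ℝ => 1 - c*z) (-c) z := by
      simpa using ((hasDerivAt_id z).const_mul c).const_sub 1
    have h4 := (h3.mul h2).sub_const 1
    refine h4.congr_deriv ?_
    ring
  have hWd : Differentiable ℝ W := fun z => (hW' z).differentiableAt
  have hPkey : c*(δ-c)*P = δ - 2*c := by
    rw [hP]; field_simp [hc0.ne', (sub_pos.2 hcδ).ne']
  have hWmono : MonotoneOn W (Icc 0 P) := by
    apply monotoneOn_of_deriv_nonneg (convex_Icc _ _) hWd.continuous.continuousOn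
      hWd.differentiableOn
    intro z hz
    rw [interior_Icc] at hz
    rw [(hW' z).deriv]
    have h5 : c*(δ-c)*z ≤ c*(δ-c)*P := mul_le_mul_of_nonneg_left hz.2.le hcdc.le
    have h6 : 0 ≤ (δ - 2*c) - c*(δ-c)*z := by rw [← hPkey]; linarith
    exact mul_nonneg h6 (Real.exp_pos _).le
  have hWanti : AntitoneOn W (Ici P) := by
    apply antitoneOn_of_deriv_nonpos (convex_Ici _) hWd.continuous.continuousOn
      hWd.differentiableOn
    intro z hz
    rw [interior_Ici] at hz
    rw [(hW' z).deriv]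
    have h5 : c*(δ-c)*P ≤ c*(δ-c)*z := mul_le_mul_of_nonneg_left (le_of_lt hz) hcdc.le
    have h6 : (δ - 2*c) - c*(δ-c)*z ≤ 0 := by rw [← hPkey]; linarith
    exact mul_nonpos_of_nonpos_of_nonneg h6 (Real.exp_pos _).le
  have hPq : P ≤ 1/c + 1 := by
    have h1 : P ≤ 1/c := by
      rw [hP, div_le_div_iff₀ hcdc hc0]
      nlinarith
    linarith
  have hWq : W (1/c + 1) < 0 := by
    have h1 : 1 - c*(1/c+1) = -c := by field_simp; ring
    show (1 - c*(1/c+1)) * Real.exp ((δ - c)*(1/c+1)) - 1 < 0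
    rw [h1]
    have := Real.exp_pos ((δ-c)*(1/c+1))
    nlinarith
  have hW0 : W 0 = 0 := by simp [hW]
  obtain ⟨b₁, hb₁P, hW_pos, hW_neg⟩ :=
    sign_split hP0 hPq hWmono hWanti hW0 hWq hWd.continuous.continuousOn
  have hb₁0 : 0 ≤ b₁ := le_trans hP0 hb₁P
  -- The function u
  set u : ℝ → ℝ := fun z => δ*z*Real.exp (-(c*z)) - (1 - Real.exp (-(δ*z))) with hu
  have hu' : ∀ z, HasDerivAt u (δ * Real.exp (-(δ*z)) * W z) z := by
    intro z
    have h1 : HasDerivAt (fun z : ℝ => δ*z) δ z := by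
      simpa using (hasDerivAt_id z).const_mul δ
    have h2 : HasDerivAt (fun z : ℝ => -(c*z)) (-c) z := by
      simpa [Pi.neg_def] using ((hasDerivAt_id z).const_mul c).neg
    have h3 := h2.exp
    have h4 := h1.mul h3
    have h5 : HasDerivAt (fun z : ℝ => -(δ*z)) (-δ) z := by
      simpa [Pi.neg_def] using ((hasDerivAt_id z).const_mul δ).neg
    have h6 := h5.exp
    have h7 := h4.sub ((hasDerivAt_const z (1:ℝ)).sub h6)
    refine h7.congr_deriv (Eq.symm ?_)
    show δ * Real.exp (-(δ*z)) * ((1 - c*z) * Real.exp ((δ - c)*z) - 1) = _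
    have he : Real.exp (-(δ*z)) * Real.exp ((δ-c)*z) = Real.exp (-(c*z)) := by
      rw [← Real.exp_add]; ring_nf
    linear_combination (δ*(1-c*z)) * he
  have hud : Differentiable ℝ u := fun z => (hu' z).differentiableAt
  have humono : MonotoneOn u (Icc 0 b₁) := by
    apply monotoneOn_of_deriv_nonneg (convex_Icc _ _) hud.continuous.continuousOn
      hud.differentiableOn
    intro z hz
    rw [interior_Icc] at hz
    rw [(hu' z).deriv]
    exact mul_nonneg (mul_nonneg hδ0.le (Real.exp_pos _).le) (hW_pos z ⟨hz.1.le, hz.2.le⟩)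
  have huanti : AntitoneOn u (Ici b₁) := by
    apply antitoneOn_of_deriv_nonpos (convex_Ici _) hud.continuous.continuousOn
      hud.differentiableOn
    intro z hz
    rw [interior_Ici] at hz
    rw [(hu' z).deriv]
    exact mul_nonpos_of_nonneg_of_nonpos (mul_nonneg hδ0.le (Real.exp_pos _).le)
      (hW_neg z (mem_Ici.2 hz.le))
  have hulim : Tendsto u atTop (nhds (-1)) := by
    have h2 : Tendsto (fun z : ℝ => c*z) atTop atTop :=
      Tendsto.const_mul_atTop hc0 tendsto_id
    have h3 := (tendsto_pow_mul_exp_neg_atTop_nhds_zero 1).comp h2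
    have h1 : Tendsto (fun z : ℝ => δ*z*Real.exp (-(c*z))) atTop (nhds 0) := by
      have h4 : (fun z : ℝ => δ*z*Real.exp (-(c*z)))
          = fun z => (δ/c) * ((c*z)^1 * Real.exp (-(c*z))) := by
        funext z
        field_simp
      rw [h4]
      simpa using h3.const_mul (δ/c)
    have h6 : Tendsto (fun z : ℝ => δ*z) atTop atTop :=
      Tendsto.const_mul_atTop hδ0 tendsto_id
    have h7 : Tendsto (fun z : ℝ => Real.exp (-(δ*z))) atTop (nhds 0) :=
      Real.tendsto_exp_neg_atTop_nhds_zero.comp h6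
    have h5 : Tendsto (fun z : ℝ => 1 - Real.exp (-(δ*z))) atTop (nhds 1) := by
      simpa using tendsto_const_nhds.sub h7
    have := h1.sub h5
    simpa using this
  obtain ⟨q₂, hq₂b, hq₂⟩ : ∃ q₂, b₁ ≤ q₂ ∧ u q₂ < 0 := by
    have h := hulim.eventually (eventually_lt_nhds (by norm_num : (-1:ℝ) < 0))
    obtain ⟨z, hz1, hz2⟩ := (h.and (eventually_ge_atTop b₁)).exists
    exact ⟨z, hz2, hz1⟩
  have hu0 : u 0 = 0 := by simp [hu]
  obtain ⟨b₂, hb₂b₁, hu_pos, hu_neg⟩ :=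
    sign_split hb₁0 hq₂b humono huanti hu0 hq₂ hud.continuous.continuousOn
  have hb₂0 : 0 ≤ b₂ := le_trans hb₁0 hb₂b₁
  -- The function f
  set G : ℝ → ℝ := fun z => (1 - Real.exp (-(δ*z)))^m with hG
  set f : ℝ → ℝ := fun z =>
    (∫ t in (0:ℝ)..z, t ^ n * Real.exp (-t)) / (n.factorial : ℝ) - G z with hf
  have hG' : ∀ z, HasDerivAt G
      ((m:ℝ) * (1 - Real.exp (-(δ*z)))^n * (δ * Real.exp (-(δ*z)))) z := by
    intro z
    have h5 : HasDerivAt (fun z : ℝ => -(δ*z)) (-δ) z := by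
      simpa [Pi.neg_def] using ((hasDerivAt_id z).const_mul δ).neg
    have h6 := (h5.exp).const_sub 1
    have h7 := h6.pow m
    refine h7.congr_deriv ?_
    rw [← hn]
    ring
  have hf' : ∀ z, HasDerivAt f
      (z^n * Real.exp (-z) / (n.factorial:ℝ)
        - (m:ℝ) * (1 - Real.exp (-(δ*z)))^n * (δ * Real.exp (-(δ*z)))) z :=
    fun z => ((I_hasDerivAt n z).div_const _).sub (hG' z)
  have hfd : Differentiable ℝ f := fun z => (hf' z).differentiableAt
  have hkey : ∀ z : ℝ,
      (m:ℝ) * δ * Real.exp (-(δ*z)) * (δ*z*Real.exp (-(c*z)))^n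
        = z^n * Real.exp (-z) / (n.factorial:ℝ) := by
    intro z
    have e1 : Real.exp (-(c*z)) ^ n = Real.exp (-((n:ℝ)*c*z)) := by
      rw [← Real.exp_nat_mul]; ring_nf
    have e2 : Real.exp (-(δ*z)) * Real.exp (-((n:ℝ)*c*z)) = Real.exp (-z) := by
      rw [← Real.exp_add]
      congr 1
      linear_combination (-z) * hnc
    have hfaceq : (m.factorial : ℝ) = (m:ℝ) * (n.factorial : ℝ) := by
      rw [hmn, Nat.factorial_succ]; push_cast; ring
    have hnfac0 : (n.factorial : ℝ) ≠ 0 := by positivity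
    have hm0 : (m:ℝ) ≠ 0 := by positivity
    have e3 : (m:ℝ) * δ^(n+1) = ((n.factorial:ℝ))⁻¹ := by
      have h := hδm
      rw [hmn, Nat.factorial_succ] at h
      push_cast at h
      rw [h, hmcast]
      have hne : ((n:ℝ)+1) ≠ 0 := by positivity
      field_simp
    calc (m:ℝ) * δ * Real.exp (-(δ*z)) * (δ*z*Real.exp (-(c*z)))^n
        = ((m:ℝ)*δ^(n+1)) * z^n * (Real.exp (-(δ*z)) * Real.exp (-(c*z))^n) := by
          rw [mul_pow, mul_pow]; ring
      _ = ((m:ℝ)*δ^(n+1)) * z^n * Real.exp (-z) := by rw [e1, e2]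
      _ = z^n * Real.exp (-z) / (n.factorial:ℝ) := by rw [e3]; ring
  have hderiv : ∀ z : ℝ, deriv f z
      = (m:ℝ)*δ*Real.exp (-(δ*z))
        * ((δ*z*Real.exp (-(c*z)))^n - (1 - Real.exp (-(δ*z)))^n) := by
    intro z
    rw [(hf' z).deriv, ← hkey z]
    ring
  have hfmono : MonotoneOn f (Icc 0 b₂) := by
    apply monotoneOn_of_deriv_nonneg (convex_Icc _ _) hfd.continuous.continuousOn
      hfd.differentiableOn
    intro z hz
    rw [interior_Icc] at hz
    rw [hderiv z]
    have huz := hu_pos z ⟨hz.1.le, hz.2.le⟩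
    have hB0 : 0 ≤ 1 - Real.exp (-(δ*z)) := by
      have : Real.exp (-(δ*z)) ≤ 1 := Real.exp_le_one_iff.2 (by nlinarith [hz.1])
      linarith
    have hAB : 1 - Real.exp (-(δ*z)) ≤ δ*z*Real.exp (-(c*z)) := by
      simp only [hu] at huz
      linarith
    have := pow_le_pow_left₀ hB0 hAB n
    exact mul_nonneg (by positivity) (by linarith)
  have hfanti : AntitoneOn f (Ici b₂) := by
    apply antitoneOn_of_deriv_nonpos (convex_Ici _) hfd.continuous.continuousOn
      hfd.differentiableOn
    intro z hz
    rw [interior_Ici] at hz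
    rw [hderiv z]
    have hz0 : 0 ≤ z := le_trans hb₂0 hz.le
    have huz := hu_neg z (mem_Ici.2 hz.le)
    have hA0 : 0 ≤ δ*z*Real.exp (-(c*z)) := by positivity
    have hAB : δ*z*Real.exp (-(c*z)) ≤ 1 - Real.exp (-(δ*z)) := by
      simp only [hu] at huz
      linarith
    have := pow_le_pow_left₀ hA0 hAB n
    exact mul_nonpos_of_nonneg_of_nonpos (by positivity) (by linarith)
  have hf0 : f 0 = 0 := by
    show (∫ t in (0:ℝ)..0, t ^ n * Real.exp (-t)) / (n.factorial : ℝ) - G 0 = 0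
    rw [intervalIntegral.integral_same]
    have hG0 : G 0 = 0 := by
      show (1 - Real.exp (-(δ*0)))^m = 0
      rw [mul_zero, neg_zero, Real.exp_zero, sub_self]
      exact zero_pow (by omega)
    rw [hG0]
    norm_num
  have hflim : Tendsto f atTop (nhds 0) := by
    have hIl := (I_tendsto n).div_const ((n.factorial : ℝ))
    rw [div_self (by positivity : (n.factorial:ℝ) ≠ 0)] at hIl
    have h6 : Tendsto (fun z : ℝ => δ*z) atTop atTop :=
      Tendsto.const_mul_atTop hδ0 tendsto_id
    have h7 : Tendsto (fun z : ℝ => Real.exp (-(δ*z))) atTop (nhds 0) :=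
      Real.tendsto_exp_neg_atTop_nhds_zero.comp h6
    have hGlim : Tendsto G atTop (nhds 1) := by
      have h5 : Tendsto (fun z : ℝ => 1 - Real.exp (-(δ*z))) atTop (nhds 1) := by
        simpa using tendsto_const_nhds.sub h7
      have := h5.pow m
      simpa using this
    have := hIl.sub hGlim
    simpa using this
  have := pos_of_updown hb₂0 hf0 hflim hfmono hfanti hy
  simp only [hf, hG] at this
  linarith

lemma upper_bound (m : ℕ) (hm : 2 ≤ m) {y : ℝ} (hy : 0 ≤ y) :
    (∫ t in (0:ℝ)..y, t ^ (m - 1) * Real.exp (-t)) / ((m - 1).factorial : ℝ)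
      ≤ (1 - Real.exp (-y)) ^ m := by
  set n := m - 1 with hn
  have hmn : m = n + 1 := by omega
  have hn1 : 1 ≤ n := by omega
  have hnR : ((n:ℝ)) ≠ 0 := by
    have : (0:ℝ) < (n:ℝ) := by exact_mod_cast hn1
    exact this.ne'
  have hfac1 : (1:ℝ) ≤ (m.factorial : ℝ) := by exact_mod_cast m.factorial_pos
  set C : ℝ := ((m.factorial : ℝ)) ^ ((n:ℝ)⁻¹) with hC
  have hC0 : 0 < C := Real.rpow_pos_of_pos (by linarith) _
  have hCn : C ^ n = (m.factorial : ℝ) := by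
    rw [hC, ← Real.rpow_natCast (((m.factorial : ℝ)) ^ ((n:ℝ)⁻¹)) n, ← Real.rpow_mul (by linarith),
      inv_mul_cancel₀ hnR, Real.rpow_one]
  have hC1 : 1 ≤ C := by
    by_contra hlt
    push_neg at hlt
    have : C ^ n < 1 := pow_lt_one₀ hC0.le hlt (by omega)
    rw [hCn] at this
    linarith
  -- the function ψ
  set ψ : ℝ → ℝ := fun z => C * (1 - Real.exp (-z)) - z with hψ
  have hψ' : ∀ z, HasDerivAt ψ (C * Real.exp (-z) - 1) z := by
    intro z
    have h1 : HasDerivAt (fun z : ℝ => -z) (-1) z := (hasDerivAt_id z).neg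
    have h2 := ((h1.exp).const_sub 1).const_mul C
    have h3 := h2.sub (hasDerivAt_id z)
    refine h3.congr_deriv ?_
    ring
  have hψd : Differentiable ℝ ψ := fun z => (hψ' z).differentiableAt
  have hlogC : 0 ≤ Real.log C := Real.log_nonneg hC1
  have hψmono : MonotoneOn ψ (Icc 0 (Real.log C)) := by
    apply monotoneOn_of_deriv_nonneg (convex_Icc _ _) hψd.continuous.continuousOn
      hψd.differentiableOn
    intro z hz
    rw [interior_Icc] at hz
    rw [(hψ' z).deriv]
    have h4 : Real.exp (-(Real.log C)) ≤ Real.exp (-z) := Real.exp_le_exp.2 (by linarith [hz.2])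
    rw [Real.exp_neg, Real.exp_log hC0] at h4
    have h5 : C * C⁻¹ ≤ C * Real.exp (-z) := mul_le_mul_of_nonneg_left h4 hC0.le
    rw [mul_inv_cancel₀ hC0.ne'] at h5
    linarith
  have hψanti : AntitoneOn ψ (Ici (Real.log C)) := by
    apply antitoneOn_of_deriv_nonpos (convex_Ici _) hψd.continuous.continuousOn
      hψd.differentiableOn
    intro z hz
    rw [interior_Ici] at hz
    rw [(hψ' z).deriv]
    have h4 : Real.exp (-z) ≤ Real.exp (-(Real.log C)) := Real.exp_le_exp.2 (by linarith [mem_Ioi.1 hz])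
    rw [Real.exp_neg (Real.log C), Real.exp_log hC0] at h4
    have h5 : C * Real.exp (-z) ≤ C * C⁻¹ := mul_le_mul_of_nonneg_left h4 hC0.le
    rw [mul_inv_cancel₀ hC0.ne'] at h5
    linarith
  have hψ0 : ψ 0 = 0 := by simp [hψ]
  have hq : Real.log C ≤ C + 1 := by
    have := Real.log_le_sub_one_of_pos hC0
    linarith
  have hψq : ψ (C + 1) < 0 := by
    show C * (1 - Real.exp (-(C+1))) - (C+1) < 0
    have h1 := Real.exp_pos (-(C+1))
    nlinarith
  obtain ⟨b, hbC, hψ_pos, hψ_neg⟩ :=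
    sign_split hlogC hq hψmono hψanti hψ0 hψq hψd.continuous.continuousOn
  have hb0 : 0 ≤ b := le_trans hlogC hbC
  -- the function f
  set f : ℝ → ℝ := fun z =>
    (1 - Real.exp (-z))^m - (∫ t in (0:ℝ)..z, t ^ n * Real.exp (-t)) / (n.factorial : ℝ) with hf
  have hG' : ∀ z, HasDerivAt (fun z : ℝ => (1 - Real.exp (-z))^m)
      ((m:ℝ) * (1 - Real.exp (-z))^n * Real.exp (-z)) z := by
    intro z
    have h1 : HasDerivAt (fun z : ℝ => -z) (-1) z := (hasDerivAt_id z).neg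
    have h2 := (h1.exp).const_sub 1
    have h3 := h2.pow m
    refine h3.congr_deriv ?_
    rw [← hn]
    ring
  have hf' : ∀ z, HasDerivAt f
      ((m:ℝ) * (1 - Real.exp (-z))^n * Real.exp (-z)
        - z^n * Real.exp (-z) / (n.factorial:ℝ)) z :=
    fun z => (hG' z).sub ((I_hasDerivAt n z).div_const _)
  have hfd : Differentiable ℝ f := fun z => (hf' z).differentiableAt
  have hfaceq : (m.factorial : ℝ) = (m:ℝ) * (n.factorial : ℝ) := by
    rw [hmn, Nat.factorial_succ]; push_cast; ring
  have hnfac0 : (n.factorial : ℝ) ≠ 0 := by positivity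
  have hderiv : ∀ z : ℝ, deriv f z
      = Real.exp (-z) / (n.factorial:ℝ) * ((C * (1 - Real.exp (-z)))^n - z^n) := by
    intro z
    rw [(hf' z).deriv, mul_pow, hCn, hfaceq]
    field_simp
  have hfmono : MonotoneOn f (Icc 0 b) := by
    apply monotoneOn_of_deriv_nonneg (convex_Icc _ _) hfd.continuous.continuousOn
      hfd.differentiableOn
    intro z hz
    rw [interior_Icc] at hz
    rw [hderiv z]
    have hψz := hψ_pos z ⟨hz.1.le, hz.2.le⟩
    have hzC : z ≤ C * (1 - Real.exp (-z)) := by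
      simp only [hψ] at hψz; linarith
    have := pow_le_pow_left₀ hz.1.le hzC n
    exact mul_nonneg (by positivity) (by linarith)
  have hfanti : AntitoneOn f (Ici b) := by
    apply antitoneOn_of_deriv_nonpos (convex_Ici _) hfd.continuous.continuousOn
      hfd.differentiableOn
    intro z hz
    rw [interior_Ici] at hz
    rw [hderiv z]
    have hz0 : 0 ≤ z := le_trans hb0 hz.le
    have hψz := hψ_neg z (mem_Ici.2 hz.le)
    have hCz : C * (1 - Real.exp (-z)) ≤ z := by
      simp only [hψ] at hψz; linarith
    have hC0' : 0 ≤ C * (1 - Real.exp (-z)) := by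
      have : Real.exp (-z) ≤ 1 := Real.exp_le_one_iff.2 (by linarith)
      have h9 : 0 ≤ 1 - Real.exp (-z) := by linarith
      positivity
    have := pow_le_pow_left₀ hC0' hCz n
    exact mul_nonpos_of_nonneg_of_nonpos (by positivity) (by linarith)
  have hf0 : f 0 = 0 := by
    show (1 - Real.exp (-(0:ℝ)))^m - (∫ t in (0:ℝ)..0, t ^ n * Real.exp (-t)) / (n.factorial : ℝ) = 0
    rw [intervalIntegral.integral_same, neg_zero, Real.exp_zero, sub_self, zero_pow (by omega : m ≠ 0)]
    norm_num
  have hflim : Tendsto f atTop (nhds 0) := by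
    have hIl := (I_tendsto n).div_const ((n.factorial : ℝ))
    rw [div_self hnfac0] at hIl
    have h7 : Tendsto (fun z : ℝ => Real.exp (-z)) atTop (nhds 0) :=
      Real.tendsto_exp_neg_atTop_nhds_zero
    have hGlim : Tendsto (fun z : ℝ => (1 - Real.exp (-z))^m) atTop (nhds 1) := by
      have h5 : Tendsto (fun z : ℝ => 1 - Real.exp (-z)) atTop (nhds 1) := by
        simpa using tendsto_const_nhds.sub h7
      have := h5.pow m
      simpa using this
    have := hGlim.sub hIl
    simpa using this
  have := pos_of_updown hb0 hf0 hflim hfmono hfanti hy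
  simp only [hf] at this
  linarith

end AlzerAux

/-- Alzer's inequality for the Gamma CDF with integer shape `m ≥ 1`: for `x ≥ 0` and
`κ = (m!)^{−1/m} ∈ (0,1]`,
`(1 − e^{−mκx})^m ≤ (1/Γ(m))∫₀^{mx} t^{m−1}e^{−t}dt ≤ (1 − e^{−mx})^m`,
with equality throughout when `m = 1`. -/
theorem alzer_gamma_cdf_bounds (m : ℕ) (hm : 1 ≤ m) (x : ℝ) (hx : 0 ≤ x)
    (κ : ℝ) (hκ : κ = (Nat.factorial m : ℝ) ^ (-(1 / (m : ℝ)))) :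
    0 < κ ∧ κ ≤ 1 ∧
    (1 - Real.exp (-((m : ℝ) * κ * x))) ^ m
      ≤ (∫ t in (0:ℝ)..((m : ℝ) * x), t ^ (m - 1) * Real.exp (-t)) / (Nat.factorial (m - 1) : ℝ) ∧
    (∫ t in (0:ℝ)..((m : ℝ) * x), t ^ (m - 1) * Real.exp (-t)) / (Nat.factorial (m - 1) : ℝ)
      ≤ (1 - Real.exp (-((m : ℝ) * x))) ^ m ∧
    (m = 1 →
      (1 - Real.exp (-((m : ℝ) * κ * x))) ^ m
          = (∫ t in (0:ℝ)..((m : ℝ) * x), t ^ (m - 1) * Real.exp (-t)) / (Nat.factorial (m - 1) : ℝ) ∧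
        (∫ t in (0:ℝ)..((m : ℝ) * x), t ^ (m - 1) * Real.exp (-t)) / (Nat.factorial (m - 1) : ℝ)
          = (1 - Real.exp (-((m : ℝ) * x))) ^ m) := by
  have hfacpos : (0:ℝ) < (Nat.factorial m : ℝ) := by exact_mod_cast m.factorial_pos
  have hfac1 : (1:ℝ) ≤ (Nat.factorial m : ℝ) := by exact_mod_cast m.factorial_pos
  have hmpos : (0:ℝ) < (m:ℝ) := by exact_mod_cast hm
  have hκ0 : 0 < κ := by rw [hκ]; exact Real.rpow_pos_of_pos hfacpos _
  have hκ1 : κ ≤ 1 := by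
    rw [hκ]
    apply Real.rpow_le_one_of_one_le_of_nonpos hfac1
    have : 0 ≤ 1/(m:ℝ) := by positivity
    linarith
  have hκm : κ ^ m = ((Nat.factorial m : ℝ))⁻¹ := by
    rw [hκ, ← Real.rpow_natCast ((Nat.factorial m : ℝ) ^ (-(1/(m:ℝ)))) m,
      ← Real.rpow_mul hfacpos.le]
    rw [show (-(1/(m:ℝ)))*(m:ℝ) = -1 by field_simp]
    exact Real.rpow_neg_one _
  rcases eq_or_lt_of_le hm with h1 | h2
  · -- m = 1
    have hm1 : m = 1 := h1.symm
    subst hm1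
    have hκeq : κ = 1 := by rw [hκ]; norm_num
    subst hκeq
    have key : (∫ t in (0:ℝ)..x, Real.exp (-t)) = 1 - Real.exp (-x) := by
      have hderiv : ∀ t ∈ Set.uIcc (0:ℝ) x,
          HasDerivAt (fun s => -Real.exp (-s)) (Real.exp (-t)) t := by
        intro t _
        have h := (((hasDerivAt_id t).neg).exp).neg
        simpa [Pi.neg_def] using h
      rw [intervalIntegral.integral_eq_sub_of_hasDerivAt hderiv
        ((Real.continuous_exp.comp continuous_neg).intervalIntegrable _ _)]
      simp
      ring
    refine ⟨hκ0, hκ1, ?_, ?_, fun _ => ⟨?_, ?_⟩⟩ <;>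
      simp [key, Nat.factorial]
  · -- m ≥ 2
    have hm2 : 2 ≤ m := h2
    have hκlt1 : κ < 1 := by
      have hfac2 : (2:ℝ) ≤ (Nat.factorial m : ℝ) := by
        exact_mod_cast le_trans hm2 (Nat.self_le_factorial m)
      by_contra hge
      push_neg at hge
      have h3 : (1:ℝ) ≤ κ ^ m := by
        have := pow_le_pow_left₀ (by norm_num : (0:ℝ) ≤ 1) hge m
        simpa using this
      rw [hκm] at h3
      have h4 : ((Nat.factorial m:ℝ))⁻¹ ≤ 1/2 := by
        rw [inv_eq_one_div]
        apply div_le_div_of_nonneg_left <;> linarith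
      linarith
    have hκ2 : 2/((m:ℝ)+1) ≤ κ := by
      have hfl := AlzerAux.factorial_le_pow m (by omega)
      have h1 : (2/((m:ℝ)+1))^m ≤ κ^m := by
        rw [hκm]
        calc (2/((m:ℝ)+1))^m = ((((m:ℝ)+1)/2)^m)⁻¹ := by rw [← inv_pow, inv_div]
          _ ≤ ((Nat.factorial m:ℝ))⁻¹ := inv_anti₀ hfacpos hfl
      exact le_of_pow_le_pow_left₀ (by omega) hκ0.le h1
    have hy : 0 ≤ (m:ℝ)*x := mul_nonneg hmpos.le hx
    have hL := AlzerAux.lower_bound m hm2 κ hκ0 hκlt1 hκm hκ2 hy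
    have hU := AlzerAux.upper_bound m hm2 hy
    refine ⟨hκ0, hκ1, ?_, hU, fun h => absurd h (by omega)⟩
    have hco : (m:ℝ)*κ*x = κ*((m:ℝ)*x) := by ring
    rw [hco]
    exact hL
end
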